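/- arXiv:2604.08839 — 3 statements merged into one kernel-verified Lean document; each statement's English description precedes it below -/
import Mathlib

section
/- For every complex number q with |q| < 1, Y(q) = -∑_{k=1}^∞ ∑_{n=1}^∞ q^{k+n}/((1+q^n)(1+q^{2k-1})) - ∑_{k=1}^∞ ∑_{n=1}^∞ q^{2kn+k}/((1-q^{2n})(1+q^{2k-1})) + Z(q). -/
open Complex

noncomputable def Yser (q : ℂ) : ℂ :=
  ∑' n : ℕ, ∑' m : ℕ,
    (-1 : ℂ) ^ (m + 1) * q ^ (2 * (n + 1) * (m + 1) + (m + 1)) /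
      ((1 - q ^ (2 * m + 1)) * (1 + q ^ (n + 1)))

noncomputable def Zser (q : ℂ) : ℂ :=
  ∑' k : ℕ, ∑' n : ℕ,
    q ^ (2 * (k + 1) * (n + 1)) / ((1 + q ^ (2 * n + 1)) * (1 - q ^ (2 * k + 1)))

/-!
Write `A`, `B` for the two double series on the right. Expanding `1 / (1 - q^(2m-1))` in `Y` as a
geometric series and summing over `m` first turns `Y` into minus the part `n < k` of
`A = ∑ q^(k+n) / ((1 + q^n) (1 + q^(2k-1)))`. On the complementary part `n ≥ k`, expanding
`1 / (1 + q^n)` and summing over `n - k` first leaves, for each `k`,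
`∑_m (-1)^m q^(k(m+2)) / ((1 - q^(m+1)) (1 + q^(2k-1)))`, whose even and odd terms are the terms
of `Z` and of `-B`. Hence `Y = -(A - (Z - B))`.
-/

theorem tsum_mul_geometric_of_norm_lt_one {K : Type*} [NormedDivisionRing K] {ξ : K} (c : K)
    (h : ‖ξ‖ < 1) : ∑' n, c * ξ ^ n = c / (1 - ξ) := by
  rw [tsum_mul_left, tsum_geometric_of_norm_lt_one h, div_eq_mul_inv]

theorem summable_of_norm_le_mul_pow_add {E : Type*} [NormedAddCommGroup E] [CompleteSpace E]
    {f : ℕ × ℕ → E} {C r : ℝ} (hr₀ : 0 ≤ r) (hr : r < 1)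
    (hf : ∀ p, ‖f p‖ ≤ C * r ^ (p.1 + p.2)) : Summable f := by
  have hg := summable_geometric_of_lt_one hr₀ hr
  refine .of_norm_bounded (((hg.mul_of_nonneg hg (fun _ ↦ by positivity)
    fun _ ↦ by positivity).mul_left C)) fun p ↦ ?_
  simpa only [pow_add] using hf p

theorem tsum_div_one_sub_eq_tsum_tsum_mul_pow {K : Type*} [NormedField K] [CompleteSpace K]
    {a x : ℕ → K} {C r : ℝ} (hr : r < 1)
    (ha : ∀ m, ‖a m‖ ≤ C * r ^ m) (hx : ∀ m, ‖x m‖ ≤ r) :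
    ∑' m, a m / (1 - x m) = ∑' j, ∑' m, a m * x m ^ j := by
  have hsum : Summable (Function.uncurry fun m j ↦ a m * x m ^ j) := by
    refine summable_of_norm_le_mul_pow_add (C := C) ((norm_nonneg _).trans (hx 0)) hr fun p ↦ ?_
    rw [Function.uncurry_apply_pair, norm_mul, norm_pow, pow_add, ← mul_assoc]
    exact mul_le_mul (ha p.1) (pow_le_pow_left₀ (norm_nonneg _) (hx p.1) _) (by positivity)
      ((norm_nonneg _).trans (ha p.1))
  calc ∑' m, a m / (1 - x m) = ∑' m, ∑' j, a m * x m ^ j :=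
        tsum_congr fun m ↦ (tsum_mul_geometric_of_norm_lt_one _ ((hx m).trans_lt hr)).symm
    _ = ∑' j, ∑' m, a m * x m ^ j := hsum.tsum_comm.symm

def triangleSumEquiv : (ℕ × ℕ) ⊕ (ℕ × ℕ) ≃ ℕ × ℕ where
  toFun := Sum.elim (fun p ↦ (p.1, p.1 + p.2)) (fun p ↦ (p.1 + p.2 + 1, p.1))
  invFun p := if p.1 ≤ p.2 then .inl (p.1, p.2 - p.1) else .inr (p.2, p.1 - p.2 - 1)
  left_inv := by
    rintro (⟨i, d⟩ | ⟨i, d⟩) <;> simp; omega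
  right_inv := by
    rintro ⟨i, j⟩
    by_cases h : i ≤ j <;> simp [h]; omega

theorem tsum_tsum_eq_add_triangles {E : Type*} [NormedAddCommGroup E] [CompleteSpace E]
    {f : ℕ → ℕ → E} (hf : Summable (Function.uncurry f)) :
    ∑' i, ∑' j, f i j = ∑' i, ∑' d, f i (i + d) + ∑' i, ∑' d, f (i + d + 1) i := by
  have hs : Summable (Function.uncurry f ∘ triangleSumEquiv) :=
    triangleSumEquiv.summable_iff.mpr hf
  have hl := hs.comp_injective Sum.inl_injective
  have hr := hs.comp_injective Sum.inr_injective
  calc ∑' i, ∑' j, f i j = ∑' p, Function.uncurry f p := hf.tsum_prod.symm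
    _ = ∑' s, Function.uncurry f (triangleSumEquiv s) := (triangleSumEquiv.tsum_eq _).symm
    _ = ∑' p, Function.uncurry f (triangleSumEquiv (.inl p)) +
        ∑' p, Function.uncurry f (triangleSumEquiv (.inr p)) := Summable.tsum_sum hl hr
    _ = _ := congrArg₂ (· + ·) hl.tsum_prod hr.tsum_prod

section Estimates

variable {K : Type*} [NormedField K] {q : K}

theorem norm_pow_le_norm (hq : ‖q‖ ≤ 1) {j : ℕ} (hj : j ≠ 0) : ‖q ^ j‖ ≤ ‖q‖ := by
  rw [norm_pow]
  exact pow_le_of_le_one (norm_nonneg q) hq hj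

theorem one_sub_norm_le_norm_one_add_pow (hq : ‖q‖ ≤ 1) {j : ℕ} (hj : j ≠ 0) :
    1 - ‖q‖ ≤ ‖1 + q ^ j‖ := by
  have h := norm_le_add_norm_add (1 : K) (q ^ j)
  rw [norm_one] at h
  linarith [norm_pow_le_norm hq hj]

theorem one_sub_norm_le_norm_one_sub_pow (hq : ‖q‖ ≤ 1) {j : ℕ} (hj : j ≠ 0) :
    1 - ‖q‖ ≤ ‖1 - q ^ j‖ := by
  have h := norm_le_norm_add_norm_sub' (1 : K) (q ^ j)
  rw [norm_one] at h
  linarith [norm_pow_le_norm hq hj]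

theorem norm_pow_le_pow_of_le (hq : ‖q‖ ≤ 1) {e m : ℕ} (h : m ≤ e) : ‖q ^ e‖ ≤ ‖q‖ ^ m := by
  rw [norm_pow]
  exact pow_le_pow_of_le_one (norm_nonneg q) hq h

theorem norm_div_le_of_le_norm {x d : K} {δ : ℝ} (hδ : 0 < δ) (hd : δ ≤ ‖d‖) :
    ‖x / d‖ ≤ δ⁻¹ * ‖x‖ := by
  rw [norm_div, div_eq_inv_mul]
  exact mul_le_mul_of_nonneg_right (inv_anti₀ hδ hd) (norm_nonneg x)

theorem summable_pow_div_mul [CompleteSpace K] (hq : ‖q‖ < 1) {e : ℕ × ℕ → ℕ}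
    {d₁ d₂ : ℕ × ℕ → K} (he : ∀ p, p.1 + p.2 ≤ e p) (hd₁ : ∀ p, 1 - ‖q‖ ≤ ‖d₁ p‖)
    (hd₂ : ∀ p, 1 - ‖q‖ ≤ ‖d₂ p‖) : Summable fun p ↦ q ^ e p / (d₁ p * d₂ p) := by
  refine summable_of_norm_le_mul_pow_add (C := (1 - ‖q‖)⁻¹ * (1 - ‖q‖)⁻¹) (norm_nonneg q) hq
    fun p ↦ ?_
  have hδ : 0 < 1 - ‖q‖ := sub_pos.mpr hq
  calc ‖q ^ e p / (d₁ p * d₂ p)‖ = ‖q ^ e p / d₁ p / d₂ p‖ := by rw [div_div]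
    _ ≤ (1 - ‖q‖)⁻¹ * ((1 - ‖q‖)⁻¹ * ‖q ^ e p‖) := by
      grw [norm_div_le_of_le_norm hδ (hd₂ p), norm_div_le_of_le_norm hδ (hd₁ p)]
    _ ≤ (1 - ‖q‖)⁻¹ * (1 - ‖q‖)⁻¹ * ‖q‖ ^ (p.1 + p.2) := by
      grw [norm_pow_le_pow_of_le hq.le (he p), mul_assoc]

end Estimates

noncomputable def termA (q : ℂ) (k n : ℕ) : ℂ :=
  q ^ ((k + 1) + (n + 1)) / ((1 + q ^ (n + 1)) * (1 + q ^ (2 * k + 1)))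

noncomputable def termB (q : ℂ) (k n : ℕ) : ℂ :=
  q ^ (2 * (k + 1) * (n + 1) + (k + 1)) / ((1 - q ^ (2 * (n + 1))) * (1 + q ^ (2 * k + 1)))

noncomputable def termZ (q : ℂ) (k n : ℕ) : ℂ :=
  q ^ (2 * (k + 1) * (n + 1)) / ((1 + q ^ (2 * n + 1)) * (1 - q ^ (2 * k + 1)))

section Series

variable {q : ℂ} (hq : ‖q‖ < 1)
include hq

theorem summable_termA : Summable (Function.uncurry (termA q)) :=
  summable_pow_div_mul hq (fun _ ↦ by omega)
    (fun _ ↦ one_sub_norm_le_norm_one_add_pow hq.le (by omega))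
    (fun _ ↦ one_sub_norm_le_norm_one_add_pow hq.le (by omega))

theorem summable_termB : Summable (Function.uncurry (termB q)) :=
  summable_pow_div_mul hq (fun _ ↦ by nlinarith)
    (fun _ ↦ one_sub_norm_le_norm_one_sub_pow hq.le (by omega))
    (fun _ ↦ one_sub_norm_le_norm_one_add_pow hq.le (by omega))

theorem summable_termZ : Summable (Function.uncurry (termZ q)) :=
  summable_pow_div_mul hq (fun _ ↦ by nlinarith)
    (fun _ ↦ one_sub_norm_le_norm_one_add_pow hq.le (by omega))
    (fun _ ↦ one_sub_norm_le_norm_one_sub_pow hq.le (by omega))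

theorem tsum_Yser_inner (n : ℕ) :
    ∑' m : ℕ, (-1 : ℂ) ^ (m + 1) * q ^ (2 * (n + 1) * (m + 1) + (m + 1)) /
      ((1 - q ^ (2 * m + 1)) * (1 + q ^ (n + 1))) = -∑' j, termA q (n + j + 1) n := by
  set a : ℕ → ℂ := fun m ↦
    (-1) ^ (m + 1) * q ^ (2 * (n + 1) * (m + 1) + (m + 1)) / (1 + q ^ (n + 1))
  have hδ : 0 < 1 - ‖q‖ := sub_pos.mpr hq
  have ha : ∀ m, ‖a m‖ ≤ (1 - ‖q‖)⁻¹ * ‖q‖ ^ m := fun m ↦ by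
    grw [norm_div_le_of_le_norm hδ (one_sub_norm_le_norm_one_add_pow hq.le
      (Nat.succ_ne_zero n)), norm_mul, norm_pow, norm_neg, norm_one, one_pow, one_mul,
      norm_pow_le_pow_of_le hq.le (by nlinarith)]
  have hx : ∀ m, ‖q ^ (2 * m + 1)‖ ≤ ‖q‖ := fun m ↦ norm_pow_le_norm hq.le (by omega)
  calc _ = ∑' m, a m / (1 - q ^ (2 * m + 1)) :=
        tsum_congr fun m ↦ by rw [div_div, mul_comm (1 - _)]
    _ = ∑' j, ∑' m, a m * (q ^ (2 * m + 1)) ^ j :=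
        tsum_div_one_sub_eq_tsum_tsum_mul_pow hq ha hx
    _ = ∑' j, -termA q (n + j + 1) n := tsum_congr fun j ↦ by
      have hy : ‖-q ^ (2 * (n + j + 1) + 1)‖ < 1 := by
        rw [norm_neg]; exact (norm_pow_le_norm hq.le (by omega)).trans_lt hq
      have hA : termA q (n + j + 1) n = q ^ ((n + j + 1 + 1) + (n + 1)) / (1 + q ^ (n + 1)) /
          (1 - -q ^ (2 * (n + j + 1) + 1)) := by rw [termA, sub_neg_eq_add, div_div]
      rw [hA, ← neg_div, ← tsum_mul_geometric_of_norm_lt_one _ hy]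
      exact tsum_congr fun m ↦ by ring
    _ = -∑' j, termA q (n + j + 1) n := tsum_neg

theorem Yser_eq_neg_tsum_tsum_termA : Yser q = -∑' n, ∑' j, termA q (n + j + 1) n := by
  rw [Yser, tsum_congr (tsum_Yser_inner hq), tsum_neg]

theorem tsum_termA_from_diag (k : ℕ) :
    ∑' d, termA q k (k + d) = ∑' t, termZ q t k - ∑' t, termB q k t := by
  have hδ : 0 < 1 - ‖q‖ := sub_pos.mpr hq
  set a : ℕ → ℂ := fun d ↦ q ^ ((k + 1) + (k + d + 1)) / (1 + q ^ (2 * k + 1))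
  set V : ℕ → ℂ := fun m ↦
    (-1) ^ m * q ^ ((k + 1) * (m + 2)) / (1 + q ^ (2 * k + 1)) / (1 - q ^ (m + 1))
  have ha : ∀ d, ‖a d‖ ≤ (1 - ‖q‖)⁻¹ * ‖q‖ ^ d := fun d ↦ by
    grw [norm_div_le_of_le_norm hδ (one_sub_norm_le_norm_one_add_pow hq.le (Nat.succ_ne_zero _)),
      norm_pow_le_pow_of_le hq.le (m := d) (by omega)]
  have hx : ∀ d, ‖-q ^ (k + d + 1)‖ ≤ ‖q‖ := fun d ↦ by
    rw [norm_neg]; exact norm_pow_le_norm hq.le (by omega)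
  have hV : ∀ m, ∑' d, a d * (-q ^ (k + d + 1)) ^ m = V m := fun m ↦ by
    simp only [V]
    rw [← tsum_mul_geometric_of_norm_lt_one _ ((norm_pow_le_norm hq.le (by omega)).trans_lt hq)]
    exact tsum_congr fun d ↦ by ring
  have heven : ∀ t, V (2 * t) = termZ q t k := fun t ↦ by
    simp only [V]
    rw [termZ, div_div, (Even.neg_one_pow ⟨t, two_mul t⟩ : (-1 : ℂ) ^ (2 * t) = 1)]
    congr 1; ring
  have hodd : ∀ t, V (2 * t + 1) = -termB q k t := fun t ↦ by
    simp only [V]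
    rw [termB, div_div, ← neg_div, (Odd.neg_one_pow ⟨t, rfl⟩ : (-1 : ℂ) ^ (2 * t + 1) = -1)]
    congr 1 <;> ring
  have hZ : Summable fun t ↦ termZ q t k := (summable_termZ hq).prod_symm.prod_factor k
  have hB : Summable fun t ↦ termB q k t := (summable_termB hq).prod_factor k
  calc ∑' d, termA q k (k + d) = ∑' d, a d / (1 - -q ^ (k + d + 1)) :=
        tsum_congr fun d ↦ by rw [termA, sub_neg_eq_add, div_div, mul_comm (1 + q ^ (k + d + 1))]
    _ = ∑' m, V m := by rw [tsum_div_one_sub_eq_tsum_tsum_mul_pow hq ha hx, tsum_congr hV]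
    _ = ∑' t, termZ q t k - ∑' t, termB q k t := by
      rw [← tsum_even_add_odd (hZ.congr fun t ↦ (heven t).symm)
        (hB.neg.congr fun t ↦ (hodd t).symm), tsum_congr heven, tsum_congr hodd, tsum_neg,
        sub_eq_add_neg]

theorem tsum_tsum_termA_from_diag :
    ∑' k, ∑' d, termA q k (k + d) = Zser q - ∑' k, ∑' n, termB q k n := by
  have hZ := summable_termZ hq
  have hZ' : Summable fun k ↦ ∑' t, termZ q t k := hZ.prod_symm.prod
  have hB' : Summable fun k ↦ ∑' n, termB q k n := (summable_termB hq).prod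
  rw [tsum_congr (tsum_termA_from_diag hq), hZ'.tsum_sub hB', hZ.tsum_comm]
  rfl

end Series

theorem stmt4 (q : ℂ) (hq : ‖q‖ < 1) :
    Yser q =
      -∑' k : ℕ, ∑' n : ℕ,
          q ^ ((k + 1) + (n + 1)) / ((1 + q ^ (n + 1)) * (1 + q ^ (2 * k + 1)))
      - ∑' k : ℕ, ∑' n : ℕ,
          q ^ (2 * (k + 1) * (n + 1) + (k + 1)) /
            ((1 - q ^ (2 * (n + 1))) * (1 + q ^ (2 * k + 1)))
      + Zser q := by
  change Yser q = -∑' k, ∑' n, termA q k n - ∑' k, ∑' n, termB q k n + Zser q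
  rw [tsum_tsum_eq_add_triangles (summable_termA hq), tsum_tsum_termA_from_diag hq,
    Yser_eq_neg_tsum_tsum_termA hq]
  ring
end

section
/- For every complex number q with |q| < 1, D(q) = -∑_{k=1}^∞ ∑_{n=1}^∞ (-1)^k q^{2nk-n+k}/((1-q^{2n})(1-q^{2k-1})) = -∑_{k=1}^∞ ((-1)^k q^k/(1-q^{2k-1})) · ∑_{n=k}^∞ q^{2n-1}/(1-q^{2n-1}). -/
/-!
Write the inner sum of `Dser` as a sum over all `n < k` and exchange the two sums. For fixed `n`,
the row `∑_{k > n} q^(k+1) / (1 + q^(2k+1))` is a Lambert-type series `∑_i x^i / (1 - c y^i)`;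
expanding `1 / (1 - c y^i)` geometrically and summing the absolutely convergent double series
`∑ x^i c^j y^(ij)` the other way round turns it into `∑_j c^j / (1 - x y^j)`, which gives the first
double series. In its `k`-th row the same exchange, with `x = y = q^2` and `c = q^(2k+1)`, turns
`∑_n q^((2k+1)(n+1)) / (1 - q^(2n+2))` into `∑_{m ≥ k} q^(2m+1) / (1 - q^(2m+1))`.
-/

open Complex

noncomputable def Dser (q : ℂ) : ℂ :=
  ∑' k : ℕ, ∑ n ∈ Finset.Icc 1 k,
    q ^ (k + 1) / ((1 - q ^ (2 * n)) * (1 + q ^ (2 * k + 1)))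

theorem summable_of_norm_le_mul_pow_mul_pow {E : Type*} [NormedAddCommGroup E] [CompleteSpace E]
    {f : ℕ × ℕ → E} {C a b : ℝ} (ha₀ : 0 ≤ a) (ha₁ : a < 1) (hb₀ : 0 ≤ b) (hb₁ : b < 1)
    (h : ∀ p, ‖f p‖ ≤ C * (a ^ p.1 * b ^ p.2)) : Summable f :=
  .of_norm <| .of_nonneg_of_le (fun _ => norm_nonneg _) h <|
    ((summable_geometric_of_lt_one ha₀ ha₁).mul_of_nonneg (summable_geometric_of_lt_one hb₀ hb₁)
      (pow_nonneg ha₀) (pow_nonneg hb₀)).mul_left C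

section NormedField

variable {𝕜 : Type*} [NormedField 𝕜]

theorem norm_pow_le_norm_s13 {x : 𝕜} (hx : ‖x‖ ≤ 1) {e : ℕ} (he : e ≠ 0) : ‖x ^ e‖ ≤ ‖x‖ := by
  rw [norm_pow]
  exact pow_le_of_le_one (norm_nonneg x) hx he

theorem sub_le_norm_one_sub {w : 𝕜} {r : ℝ} (hw : ‖w‖ ≤ r) : 1 - r ≤ ‖1 - w‖ := by
  have := norm_sub_norm_le (1 : 𝕜) w
  rw [norm_one] at this
  linarith

theorem norm_div_mul_le {x d₁ d₂ : 𝕜} {c : ℝ} (hc : 0 < c) (h₁ : c ≤ ‖d₁‖) (h₂ : c ≤ ‖d₂‖) :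
    ‖x / (d₁ * d₂)‖ ≤ ‖x‖ / c ^ 2 := by
  rw [norm_div, norm_mul, sq]
  exact div_le_div_of_nonneg_left (norm_nonneg x) (mul_pos hc hc)
    (mul_le_mul h₁ h₂ hc.le (norm_nonneg _))

theorem pow_div_one_sub_mul_pow_eq_tsum {u v y : 𝕜} (hv : ‖v‖ < 1) (hy : ‖y‖ ≤ 1) (i : ℕ) :
    u ^ i / (1 - v * y ^ i) = ∑' j : ℕ, u ^ i * v ^ j * y ^ (i * j) := by
  have hvy : ‖v * y ^ i‖ < 1 := by
    rw [norm_mul, norm_pow]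
    exact (mul_le_of_le_one_right (norm_nonneg v) (pow_le_one₀ (norm_nonneg y) hy)).trans_lt hv
  rw [div_eq_mul_inv, ← tsum_geometric_of_norm_lt_one hvy, ← tsum_mul_left]
  simp only [mul_pow, pow_mul, mul_assoc]

/-- Both sides are the double series `∑ x ^ i * c ^ j * y ^ (i * j)`, summed in either order. -/
theorem tsum_pow_div_one_sub_mul_pow_comm [CompleteSpace 𝕜] {x y c : 𝕜} (hx : ‖x‖ < 1)
    (hc : ‖c‖ < 1) (hy : ‖y‖ ≤ 1) :
    ∑' i : ℕ, x ^ i / (1 - c * y ^ i) = ∑' j : ℕ, c ^ j / (1 - x * y ^ j) := by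
  have hsum : Summable (Function.uncurry fun i j : ℕ => x ^ i * c ^ j * y ^ (i * j)) := by
    refine summable_of_norm_le_mul_pow_mul_pow (C := 1) (norm_nonneg x) hx (norm_nonneg c) hc
      fun p => ?_
    simp only [Function.uncurry, norm_mul, norm_pow, one_mul]
    exact mul_le_of_le_one_right (by positivity) (pow_le_one₀ (norm_nonneg y) hy)
  simp only [pow_div_one_sub_mul_pow_eq_tsum hc hy, pow_div_one_sub_mul_pow_eq_tsum hx hy]
  rw [← hsum.tsum_comm]
  exact tsum_congr fun j => tsum_congr fun i => by ring

end NormedField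

namespace Dser

/-- The summand of `Dser` with `n` shifted down by one, extended by zero to `n ≥ k`. -/
noncomputable def term (q : ℂ) (k n : ℕ) : ℂ :=
  if n < k then q ^ (k + 1) / ((1 - q ^ (2 * (n + 1))) * (1 + q ^ (2 * k + 1))) else 0

noncomputable def dualTerm (q : ℂ) (k n : ℕ) : ℂ :=
  (-1) ^ k * q ^ (2 * k * n + 3 * k + n + 2) / ((1 - q ^ (2 * (n + 1))) * (1 - q ^ (2 * k + 1)))

variable {q : ℂ}

theorem eq_tsum_tsum_term (q : ℂ) : Dser q = ∑' k : ℕ, ∑' n : ℕ, term q k n := by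
  refine tsum_congr fun k => ?_
  rw [tsum_eq_sum (s := Finset.range k) fun n hn => by rw [term, if_neg (by simpa using hn)],
    ← Finset.Ico_add_one_right_eq_Icc, Finset.sum_Ico_eq_sum_range, Nat.add_sub_cancel]
  refine Finset.sum_congr rfl fun n hn => ?_
  rw [term, if_pos (Finset.mem_range.mp hn), add_comm 1 n]

theorem summable_term (hq : ‖q‖ < 1) : Summable (Function.uncurry (term q)) := by
  -- on the support `n < k` we have `‖q‖ ^ (k + 1) ≤ √‖q‖ ^ (k + n)`
  set s := √‖q‖
  have hs₀ : 0 ≤ s := Real.sqrt_nonneg _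
  have hs₁ : s < 1 := (Real.sqrt_lt' one_pos).mpr (by simpa using hq)
  have hsq : s ^ 2 = ‖q‖ := Real.sq_sqrt (norm_nonneg q)
  have hc : 0 < 1 - ‖q‖ := by linarith
  refine summable_of_norm_le_mul_pow_mul_pow (C := 1 / (1 - ‖q‖) ^ 2) hs₀ hs₁ hs₀ hs₁ ?_
  rintro ⟨k, n⟩
  simp only [Function.uncurry, term]
  split_ifs with hnk
  · have hden₁ := sub_le_norm_one_sub (norm_pow_le_norm_s13 hq.le (e := 2 * (n + 1)) (by omega))
    have hden₂ := sub_le_norm_one_sub (w := -q ^ (2 * k + 1))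
      ((norm_neg _).trans_le (norm_pow_le_norm_s13 hq.le (by omega)))
    rw [sub_neg_eq_add] at hden₂
    calc _ ≤ ‖q ^ (k + 1)‖ / (1 - ‖q‖) ^ 2 := norm_div_mul_le hc hden₁ hden₂
      _ = 1 / (1 - ‖q‖) ^ 2 * s ^ (2 * (k + 1)) := by rw [norm_pow, ← hsq, ← pow_mul]; ring
      _ ≤ 1 / (1 - ‖q‖) ^ 2 * (s ^ k * s ^ n) := by
        rw [← pow_add]
        exact mul_le_mul_of_nonneg_left (pow_le_pow_of_le_one hs₀ hs₁.le (by omega))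
          (by positivity)
  · rw [norm_zero]
    positivity

theorem summable_dualTerm (hq : ‖q‖ < 1) : Summable (Function.uncurry (dualTerm q)) := by
  have hc : 0 < 1 - ‖q‖ := by linarith
  refine summable_of_norm_le_mul_pow_mul_pow (C := 1 / (1 - ‖q‖) ^ 2)
    (norm_nonneg q) hq (norm_nonneg q) hq ?_
  rintro ⟨k, n⟩
  have hden₁ := sub_le_norm_one_sub (norm_pow_le_norm_s13 hq.le (e := 2 * (n + 1)) (by omega))
  have hden₂ := sub_le_norm_one_sub (norm_pow_le_norm_s13 hq.le (e := 2 * k + 1) (by omega))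
  calc _ ≤ ‖(-1) ^ k * q ^ (2 * k * n + 3 * k + n + 2)‖ / (1 - ‖q‖) ^ 2 :=
        norm_div_mul_le hc hden₁ hden₂
    _ = 1 / (1 - ‖q‖) ^ 2 * ‖q‖ ^ (2 * k * n + 3 * k + n + 2) := by
        rw [norm_mul, norm_pow, norm_neg, norm_one, one_pow, one_mul, norm_pow]; ring
    _ ≤ 1 / (1 - ‖q‖) ^ 2 * (‖q‖ ^ k * ‖q‖ ^ n) := by
        rw [← pow_add]
        exact mul_le_mul_of_nonneg_left
          (pow_le_pow_of_le_one (norm_nonneg q) hq.le (by nlinarith)) (by positivity)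

theorem tsum_term_eq_tsum_dualTerm (hq : ‖q‖ < 1) (n : ℕ) :
    ∑' k : ℕ, term q k n = ∑' k : ℕ, dualTerm q k n := by
  have hrow : Summable fun k => term q k n := (summable_term hq).prod_symm.prod_factor n
  have hshift (i : ℕ) : term q (i + (n + 1)) n = q ^ (n + 2) / (1 - q ^ (2 * (n + 1))) *
      (q ^ i / (1 - -q ^ (2 * n + 3) * (q ^ 2) ^ i)) := by
    rw [term, if_pos (by omega), div_mul_div_comm]
    congr 1 <;> ring
  have hdual (j : ℕ) : q ^ (n + 2) / (1 - q ^ (2 * (n + 1))) *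
      ((-q ^ (2 * n + 3)) ^ j / (1 - q * (q ^ 2) ^ j)) = dualTerm q j n := by
    rw [dualTerm, div_mul_div_comm]
    congr 1 <;> ring
  have hc : ‖-q ^ (2 * n + 3)‖ < 1 := by
    rw [norm_neg]; exact (norm_pow_le_norm_s13 hq.le (by omega)).trans_lt hq
  have hy : ‖q ^ 2‖ ≤ 1 := (norm_pow_le_norm_s13 hq.le (by omega)).trans hq.le
  rw [← hrow.sum_add_tsum_nat_add (n + 1),
    Finset.sum_eq_zero fun k hk => by rw [term, if_neg (by simpa using hk)], zero_add,
    tsum_congr hshift, tsum_mul_left, tsum_pow_div_one_sub_mul_pow_comm hq hc hy,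
    ← tsum_mul_left]
  exact tsum_congr hdual

theorem eq_tsum_tsum_dualTerm (hq : ‖q‖ < 1) : Dser q = ∑' k : ℕ, ∑' n : ℕ, dualTerm q k n := by
  rw [eq_tsum_tsum_term, ← (summable_term hq).tsum_comm,
    tsum_congr (tsum_term_eq_tsum_dualTerm hq), (summable_dualTerm hq).tsum_comm]

theorem dualTerm_eq (q : ℂ) (k n : ℕ) :
    dualTerm q k n = -((-1 : ℂ) ^ (k + 1) * q ^ (2 * (n + 1) * (k + 1) + (k + 1) - (n + 1)) /
      ((1 - q ^ (2 * (n + 1))) * (1 - q ^ (2 * k + 1)))) := by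
  have hexp : 2 * (n + 1) * (k + 1) + (k + 1) - (n + 1) = 2 * k * n + 3 * k + n + 2 := by
    have : 2 * (n + 1) * (k + 1) + (k + 1) = 2 * k * n + 3 * k + n + 2 + (n + 1) := by ring
    omega
  rw [dualTerm, hexp, pow_succ]
  ring

theorem tsum_dualTerm (hq : ‖q‖ < 1) (k : ℕ) :
    ∑' n : ℕ, dualTerm q k n = -(((-1 : ℂ) ^ (k + 1) * q ^ (k + 1) / (1 - q ^ (2 * k + 1))) *
      ∑' m : ℕ, q ^ (2 * (k + 1 + m) - 1) / (1 - q ^ (2 * (k + 1 + m) - 1))) := by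
  set c := q ^ (2 * k + 1)
  have hc : ‖c‖ < 1 := (norm_pow_le_norm_s13 hq.le (by omega)).trans_lt hq
  have hx : ‖q ^ 2‖ < 1 := (norm_pow_le_norm_s13 hq.le (by omega)).trans_lt hq
  have hrow (m : ℕ) : q ^ (2 * (k + 1 + m) - 1) / (1 - q ^ (2 * (k + 1 + m) - 1)) =
      c * ((q ^ 2) ^ m / (1 - c * (q ^ 2) ^ m)) := by
    rw [show 2 * (k + 1 + m) - 1 = 2 * k + 1 + 2 * m by omega, pow_add, pow_mul, mul_div_assoc]
  have hdual (n : ℕ) : dualTerm q k n =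
      (-1) ^ k * q ^ (k + 1) / (1 - c) * (c * (c ^ n / (1 - q ^ 2 * (q ^ 2) ^ n))) := by
    simp only [dualTerm, div_eq_mul_inv, mul_inv]
    ring
  rw [tsum_congr hrow, tsum_mul_left, tsum_pow_div_one_sub_mul_pow_comm hx hc hx.le,
    tsum_congr hdual, tsum_mul_left, tsum_mul_left, pow_succ]
  ring

end Dser

theorem stmt13 (q : ℂ) (hq : ‖q‖ < 1) :
    Dser q =
      -∑' k : ℕ, ∑' n : ℕ,
          (-1 : ℂ) ^ (k + 1) * q ^ (2 * (n + 1) * (k + 1) + (k + 1) - (n + 1)) /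
            ((1 - q ^ (2 * (n + 1))) * (1 - q ^ (2 * k + 1)))
    ∧ Dser q =
      -∑' k : ℕ, ((-1 : ℂ) ^ (k + 1) * q ^ (k + 1) / (1 - q ^ (2 * k + 1))) *
        ∑' m : ℕ, q ^ (2 * (k + 1 + m) - 1) / (1 - q ^ (2 * (k + 1 + m) - 1)) := by
  rw [Dser.eq_tsum_tsum_dualTerm hq, ← tsum_neg, ← tsum_neg]
  refine ⟨tsum_congr fun k => ?_, tsum_congr (Dser.tsum_dualTerm hq)⟩
  rw [← tsum_neg]
  exact tsum_congr (Dser.dualTerm_eq q k)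
end

section
/- For every complex number q with 0 < |q| < 1, ∑_{n=1}^∞ ∑_{k=1}^∞ (-1)^k q^{2nk+k-n}/((1-q^{2k-1})(1+q^{2n-1})) = -L(q) - q^{-1} N(q). -/
/-!
Splitting off the factor `1 + q^(2n+1)` by partial fractions writes each summand as
`H n k - q⁻¹ * G k n`, where `G` is the summand of `N(q)` and `H n k` is geometric in `n`.
Summing `H` over `n` produces `(-1)^(k+1) q^(k+1) x / (1 - x)^2` with `x = q^(2k+1)`; expanding
this as `∑ m x^m` and the summands of `L(q)` as geometric series in `-q^(2k+1)` exhibits both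
`∑ H` and `-L(q)` as the same absolutely convergent double series, summed in the two orders.
-/

open Complex

noncomputable def Nser (q : ℂ) : ℂ :=
  ∑' k : ℕ, ∑' n : ℕ,
    (-1 : ℂ) ^ (k + 1) * q ^ (2 * (k + 1) * (n + 1) + (k + 1) + (n + 1)) /
      ((1 + q ^ (2 * n + 1)) * (1 - q ^ (2 * k + 1)))

noncomputable def Lser (q : ℂ) : ℂ :=
  ∑' k : ℕ, (k : ℂ) * q ^ (k + 1) / (1 + q ^ (2 * k + 1))

theorem summable_prod_of_norm_le_mul {ι κ E : Type*} [NormedAddCommGroup E] [CompleteSpace E]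
    {f : ι → κ → E} {u : ι → ℝ} {v : κ → ℝ} (hu : Summable u) (hv : Summable v)
    (hu₀ : ∀ i, 0 ≤ u i) (hv₀ : ∀ j, 0 ≤ v j) (h : ∀ i j, ‖f i j‖ ≤ u i * v j) :
    Summable fun p : ι × κ => f p.1 p.2 :=
  .of_norm_bounded (hu.mul_of_nonneg hv hu₀ hv₀) fun p => h p.1 p.2

namespace LNIdentity

variable {q : ℂ}

theorem one_sub_norm_le_norm_one_add_pow (hq : ‖q‖ ≤ 1) {m : ℕ} (hm : m ≠ 0) :
    1 - ‖q‖ ≤ ‖1 + q ^ m‖ := by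
  have := norm_sub_norm_le (1 : ℂ) (-q ^ m)
  rw [norm_one, norm_neg, sub_neg_eq_add, norm_pow] at this
  linarith [pow_le_of_le_one (norm_nonneg q) hq hm]

theorem one_sub_norm_le_norm_one_sub_pow (hq : ‖q‖ ≤ 1) {m : ℕ} (hm : m ≠ 0) :
    1 - ‖q‖ ≤ ‖1 - q ^ m‖ := by
  have := norm_sub_norm_le (1 : ℂ) (q ^ m)
  rw [norm_one, norm_pow] at this
  linarith [pow_le_of_le_one (norm_nonneg q) hq hm]

theorem one_add_pow_ne_zero (hq : ‖q‖ < 1) {m : ℕ} (hm : m ≠ 0) : 1 + q ^ m ≠ 0 :=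
  norm_pos_iff.mp <| (sub_pos.mpr hq).trans_le (one_sub_norm_le_norm_one_add_pow hq.le hm)

theorem one_sub_pow_ne_zero (hq : ‖q‖ < 1) {m : ℕ} (hm : m ≠ 0) : 1 - q ^ m ≠ 0 :=
  norm_pos_iff.mp <| (sub_pos.mpr hq).trans_le (one_sub_norm_le_norm_one_sub_pow hq.le hm)

theorem sq_one_sub_norm_le_norm_mul (hq : ‖q‖ ≤ 1) {m l : ℕ} (hm : m ≠ 0) (hl : l ≠ 0) :
    (1 - ‖q‖) * (1 - ‖q‖) ≤ ‖(1 - q ^ m) * (1 + q ^ l)‖ := by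
  rw [norm_mul]
  exact mul_le_mul (one_sub_norm_le_norm_one_sub_pow hq hm)
    (one_sub_norm_le_norm_one_add_pow hq hl) (by linarith) (norm_nonneg _)

theorem norm_neg_one_pow_mul_pow_div_le (hq : ‖q‖ ≤ 1) {D : ℂ} {c : ℝ} (hc : 0 < c)
    (hD : c ≤ ‖D‖) {a b e : ℕ} (he : a + b ≤ e) (s : ℕ) :
    ‖(-1 : ℂ) ^ s * q ^ e / D‖ ≤ ‖q‖ ^ a * (‖q‖ ^ b / c) := by
  rw [← mul_div_assoc, ← pow_add, norm_div, norm_mul, norm_pow, norm_pow, norm_neg, norm_one,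
    one_pow, one_mul]
  exact div_le_div₀ (by positivity) (pow_le_pow_of_le_one (norm_nonneg q) hq he) hc hD

variable (q)

noncomputable def lhsTerm (n k : ℕ) : ℂ :=
  (-1 : ℂ) ^ (k + 1) * q ^ (2 * (n + 1) * (k + 1) + (k + 1) - (n + 1)) /
    ((1 - q ^ (2 * k + 1)) * (1 + q ^ (2 * n + 1)))

noncomputable def nTerm (k n : ℕ) : ℂ :=
  (-1 : ℂ) ^ (k + 1) * q ^ (2 * (k + 1) * (n + 1) + (k + 1) + (n + 1)) /
    ((1 + q ^ (2 * n + 1)) * (1 - q ^ (2 * k + 1)))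

noncomputable def geomTerm (n k : ℕ) : ℂ :=
  (-1 : ℂ) ^ (k + 1) * q ^ (2 * k * n + 3 * k + n + 2) / (1 - q ^ (2 * k + 1))

noncomputable def lambertTerm (a b : ℕ) : ℂ :=
  (-1 : ℂ) ^ a * b * q ^ (a + b + 2 * a * b + 1)

variable {q}

theorem lhsTerm_exponent (n k : ℕ) :
    2 * (n + 1) * (k + 1) + (k + 1) - (n + 1) = 2 * k * n + 3 * k + n + 2 := by
  have : 2 * (n + 1) * (k + 1) + (k + 1) = 2 * k * n + 3 * k + n + 2 + (n + 1) := by ring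
  omega

theorem lhsTerm_eq_geomTerm_sub (hq : ‖q‖ < 1) (n k : ℕ) :
    lhsTerm q n k = geomTerm q n k - q⁻¹ * nTerm q k n := by
  rcases eq_or_ne q 0 with rfl | hq₀
  · simp [lhsTerm, geomTerm, lhsTerm_exponent]
  have hx := one_sub_pow_ne_zero hq (2 * k).succ_ne_zero
  have hy := one_add_pow_ne_zero hq (2 * n).succ_ne_zero
  rw [lhsTerm, geomTerm, nTerm, lhsTerm_exponent]
  field_simp
  ring

theorem summable_lhsTerm (hq : ‖q‖ < 1) : Summable fun p : ℕ × ℕ => lhsTerm q p.1 p.2 := by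
  have hc : 0 < (1 - ‖q‖) * (1 - ‖q‖) := by nlinarith
  have hg := summable_geometric_of_lt_one (norm_nonneg q) hq
  refine summable_prod_of_norm_le_mul hg (hg.div_const _) (fun _ => by positivity)
    (fun _ => div_nonneg (by positivity) hc.le) fun n k => ?_
  rw [lhsTerm, lhsTerm_exponent]
  exact norm_neg_one_pow_mul_pow_div_le (a := n) (b := k) hq.le hc
    (sq_one_sub_norm_le_norm_mul hq.le (2 * k).succ_ne_zero (2 * n).succ_ne_zero)
    (by nlinarith) _

theorem summable_nTerm (hq : ‖q‖ < 1) : Summable fun p : ℕ × ℕ => nTerm q p.1 p.2 := by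
  have hc : 0 < (1 - ‖q‖) * (1 - ‖q‖) := by nlinarith
  have hg := summable_geometric_of_lt_one (norm_nonneg q) hq
  refine summable_prod_of_norm_le_mul hg (hg.div_const _) (fun _ => by positivity)
    (fun _ => div_nonneg (by positivity) hc.le) fun k n => ?_
  rw [nTerm, mul_comm (1 + _)]
  exact norm_neg_one_pow_mul_pow_div_le (a := k) (b := n) hq.le hc
    (sq_one_sub_norm_le_norm_mul hq.le (2 * k).succ_ne_zero (2 * n).succ_ne_zero)
    (by nlinarith) _

theorem summable_geomTerm (hq : ‖q‖ < 1) : Summable fun p : ℕ × ℕ => geomTerm q p.1 p.2 := by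
  have hg := summable_geometric_of_lt_one (norm_nonneg q) hq
  refine summable_prod_of_norm_le_mul hg (hg.div_const (1 - ‖q‖)) (fun _ => by positivity)
    (fun _ => div_nonneg (by positivity) (by linarith)) fun n k => ?_
  exact norm_neg_one_pow_mul_pow_div_le (a := n) (b := k) hq.le (by linarith)
    (one_sub_norm_le_norm_one_sub_pow hq.le (2 * k).succ_ne_zero) (by nlinarith) _

theorem summable_lambertTerm (hq : ‖q‖ < 1) : Summable fun p : ℕ × ℕ => lambertTerm q p.1 p.2 := by
  have hg := summable_geometric_of_lt_one (norm_nonneg q) hq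
  have hng : Summable fun b : ℕ => (b : ℝ) * ‖q‖ ^ b := by
    simpa using summable_pow_mul_geometric_of_norm_lt_one 1 (by simpa using hq)
  refine summable_prod_of_norm_le_mul hg hng (fun _ => by positivity)
    (fun _ => by positivity) fun a b => ?_
  simp only [lambertTerm, norm_mul, norm_pow, norm_neg, norm_one, one_pow, one_mul,
    Complex.norm_natCast]
  calc (b : ℝ) * ‖q‖ ^ (a + b + 2 * a * b + 1) ≤ b * ‖q‖ ^ (a + b) :=
        mul_le_mul_of_nonneg_left
          (pow_le_pow_of_le_one (norm_nonneg q) hq.le (by omega)) (Nat.cast_nonneg b)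
    _ = ‖q‖ ^ a * (b * ‖q‖ ^ b) := by ring

theorem tsum_geomTerm (hq : ‖q‖ < 1) (k : ℕ) :
    ∑' n, geomTerm q n k = -∑' m, lambertTerm q k m := by
  have hx : ‖q ^ (2 * k + 1)‖ < 1 := by
    rw [norm_pow]; exact pow_lt_one₀ (norm_nonneg q) hq (by omega)
  have hx₀ := one_sub_pow_ne_zero hq (2 * k).succ_ne_zero
  have hH (n : ℕ) : geomTerm q n k =
      (-1) ^ (k + 1) * q ^ (k + 1) * q ^ (2 * k + 1) / (1 - q ^ (2 * k + 1)) *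
        (q ^ (2 * k + 1)) ^ n := by
    rw [geomTerm]; ring
  have hU (m : ℕ) : lambertTerm q k m = (-1) ^ k * q ^ (k + 1) * (m * (q ^ (2 * k + 1)) ^ m) := by
    rw [lambertTerm]; ring
  simp_rw [hH, hU, tsum_mul_left, tsum_geometric_of_norm_lt_one hx,
    tsum_coe_mul_geometric_of_norm_lt_one hx]
  field_simp
  ring

theorem summand_Lser_eq_tsum (hq : ‖q‖ < 1) (k : ℕ) :
    (k : ℂ) * q ^ (k + 1) / (1 + q ^ (2 * k + 1)) = ∑' j, lambertTerm q j k := by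
  have hx : ‖-q ^ (2 * k + 1)‖ < 1 := by
    rw [norm_neg, norm_pow]; exact pow_lt_one₀ (norm_nonneg q) hq (by omega)
  have hU (j : ℕ) : lambertTerm q j k = k * q ^ (k + 1) * (-q ^ (2 * k + 1)) ^ j := by
    rw [lambertTerm]; ring
  rw [tsum_congr hU, tsum_mul_left, tsum_geometric_of_norm_lt_one hx, sub_neg_eq_add,
    div_eq_mul_inv]

theorem tsum_tsum_geomTerm (hq : ‖q‖ < 1) : ∑' n, ∑' k, geomTerm q n k = -Lser q := by
  rw [← Summable.tsum_comm (f := geomTerm q) (summable_geomTerm hq)]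
  simp_rw [tsum_geomTerm hq, tsum_neg]
  rw [← Summable.tsum_comm (f := lambertTerm q) (summable_lambertTerm hq), Lser]
  simp_rw [summand_Lser_eq_tsum hq]

end LNIdentity

open LNIdentity in
theorem stmt15_general (q : ℂ) (hq : ‖q‖ < 1) :
    (∑' n : ℕ, ∑' k : ℕ,
      (-1 : ℂ) ^ (k + 1) * q ^ (2 * (n + 1) * (k + 1) + (k + 1) - (n + 1)) /
        ((1 - q ^ (2 * k + 1)) * (1 + q ^ (2 * n + 1)))) =
      -Lser q - q⁻¹ * Nser q := by
  have hG : Summable fun p : ℕ × ℕ => nTerm q p.2 p.1 := (summable_nTerm hq).prod_symm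
  calc ∑' n, ∑' k, lhsTerm q n k
      = ∑' p : ℕ × ℕ, (geomTerm q p.1 p.2 - q⁻¹ * nTerm q p.2 p.1) := by
        rw [← (summable_lhsTerm hq).tsum_prod]
        exact tsum_congr fun p => lhsTerm_eq_geomTerm_sub hq p.1 p.2
    _ = ∑' n, ∑' k, geomTerm q n k - q⁻¹ * ∑' k, ∑' n, nTerm q k n := by
        rw [(summable_geomTerm hq).tsum_sub (hG.mul_left _), tsum_mul_left,
          (summable_geomTerm hq).tsum_prod, ← (summable_nTerm hq).tsum_prod]
        exact congr_arg (_ - q⁻¹ * ·) ((Equiv.prodComm ℕ ℕ).tsum_eq fun p => nTerm q p.1 p.2)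
    _ = -Lser q - q⁻¹ * Nser q := by rw [tsum_tsum_geomTerm hq, Nser]; rfl

theorem stmt15 (q : ℂ) (hq0 : 0 < ‖q‖) (hq : ‖q‖ < 1) :
    (∑' n : ℕ, ∑' k : ℕ,
      (-1 : ℂ) ^ (k + 1) * q ^ (2 * (n + 1) * (k + 1) + (k + 1) - (n + 1)) /
        ((1 - q ^ (2 * k + 1)) * (1 + q ^ (2 * n + 1)))) =
      -Lser q - q⁻¹ * Nser q :=
  stmt15_general q hq
end
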